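/- Suppose p ≡ 1 (mod 4) is prime, and B ⊆ Z_p satisfies B - B ⊆ Q ∪ {0} with |B| = s and p > s². If the function φ₁(t) = 1 + Σ_{b∈B} χ(b - t) satisfies 0 ≤ φ₁(t) ≤ s - 1 for all t ∉ B, then (s+1)(p - s²) ≤ (s-1)(p - s²), which is a contradiction; hence there exists t ∉ B with φ₁(t) < 0 or φ₁(t) > s - 1. -/

import Mathlib

/-!
Let `φ t = 1 + ∑ b ∈ B, χ (b - t)` and `s = #B`. Since all differences inside `B` are nonzero
squares, `φ = s` on `B`. Orthogonality of `χ`, together with the Jacobi sum `J(χ, χ) = -χ(-1)`,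
which gives `∑ t, χ (b - t) χ (b' - t) = -1` for `b ≠ b'`, yields `∑ t, φ t = p` and
`∑ t, φ t ^ 2 = (s + 1) p - s ^ 2`. Hence off `B` the sum of `φ` is `p - s ^ 2` and the sum of
`φ ^ 2` is `(s + 1)(p - s ^ 2)`, while `0 ≤ φ ≤ s - 1` there would force `φ ^ 2 ≤ (s - 1) φ`,
i.e. `(s + 1)(p - s ^ 2) ≤ (s - 1)(p - s ^ 2)`, impossible for `p > s ^ 2`.
-/

open scoped Classical

noncomputable def quadChar {F : Type*} [Field F] (x : F) : ℤ :=
  if x = 0 then 0 else if IsSquare x then 1 else -1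

open Finset

section QuadraticCharShifts

variable {F : Type*} [Field F] [Fintype F] [DecidableEq F]

lemma quadraticChar_sum_sub (hF : ringChar F ≠ 2) (b : F) :
    ∑ t : F, quadraticChar F (b - t) = 0 :=
  ((Equiv.subLeft b).sum_comp _).trans (quadraticChar_sum_zero hF)

lemma quadraticChar_sum_sub_mul_sub_of_ne (hF : ringChar F ≠ 2) {b b' : F} (h : b ≠ b') :
    ∑ t : F, quadraticChar F (b - t) * quadraticChar F (b' - t) = -1 := by
  set χ := quadraticChar F
  have hc : b' - b ≠ 0 := sub_ne_zero.mpr h.symm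
  -- substituting `t = b + (b' - b) x` turns the sum into `χ (-1)` times the Jacobi sum `J(χ, χ)`
  have hsubst : ∀ x : F, χ (b - (b + (b' - b) * x)) * χ (b' - (b + (b' - b) * x)) =
      χ (-1) * (χ x * χ (1 - x)) := by
    intro x
    have hsq : χ (b' - b) * χ (b' - b) = 1 := by rw [← sq, quadraticChar_sq_one hc]
    rw [show b - (b + (b' - b) * x) = -1 * (b' - b) * x by ring,
      show b' - (b + (b' - b) * x) = (b' - b) * (1 - x) by ring]
    simp only [map_mul]
    linear_combination (χ (-1) * χ x * χ (1 - x)) * hsq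
  have hJ : jacobiSum χ χ = -χ (-1) := by
    rw [← jacobiSum_nontrivial_inv (quadraticChar_ne_one hF), quadraticChar_isQuadratic F |>.inv]
  have hneg : χ (-1) * χ (-1) = 1 := by
    rw [← sq, quadraticChar_sq_one (neg_ne_zero.mpr one_ne_zero)]
  calc ∑ t : F, χ (b - t) * χ (b' - t)
      = ∑ x : F, χ (b - (b + (b' - b) * x)) * χ (b' - (b + (b' - b) * x)) :=
        (((Equiv.mulLeft₀ _ hc).trans (Equiv.addLeft b)).sum_comp
          fun t => χ (b - t) * χ (b' - t)).symm
    _ = χ (-1) * jacobiSum χ χ := by simp only [hsubst, ← mul_sum, jacobiSum]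
    _ = -1 := by rw [hJ]; linear_combination -hneg

lemma quadraticChar_sum_sub_mul_self (b : F) :
    ∑ t : F, quadraticChar F (b - t) * quadraticChar F (b - t) = Fintype.card F - 1 := by
  rw [← add_sum_erase univ _ (mem_univ b), sub_self, quadraticChar_zero, zero_mul, zero_add,
    sum_congr rfl fun t ht => by
      rw [← sq, quadraticChar_sq_one (sub_ne_zero.mpr (ne_of_mem_erase ht).symm)],
    sum_const, card_erase_of_mem (mem_univ b), card_univ, nsmul_one,
    Nat.cast_pred Fintype.card_pos]

lemma quadraticChar_sum_sub_mul_sub (hF : ringChar F ≠ 2) (b b' : F) :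
    ∑ t : F, quadraticChar F (b - t) * quadraticChar F (b' - t) =
      if b = b' then (Fintype.card F : ℤ) - 1 else -1 := by
  split_ifs with h
  · rw [h, quadraticChar_sum_sub_mul_self]
  · exact quadraticChar_sum_sub_mul_sub_of_ne hF h

variable (B : Finset F)

lemma sum_sum_quadraticChar_sub (hF : ringChar F ≠ 2) :
    ∑ t : F, ∑ b ∈ B, quadraticChar F (b - t) = 0 := by
  rw [sum_comm]
  exact sum_eq_zero fun b _ => quadraticChar_sum_sub hF b

lemma sum_sq_sum_quadraticChar_sub (hF : ringChar F ≠ 2) :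
    ∑ t : F, (∑ b ∈ B, quadraticChar F (b - t)) ^ 2 = #B * (Fintype.card F - #B) := by
  calc ∑ t : F, (∑ b ∈ B, quadraticChar F (b - t)) ^ 2
      = ∑ b ∈ B, ∑ b' ∈ B, ∑ t : F, quadraticChar F (b - t) * quadraticChar F (b' - t) := by
        simp_rw [sq, sum_mul_sum, sum_comm (s := univ)]
    _ = ∑ b ∈ B, ∑ b' ∈ B, (-1 + if b = b' then (Fintype.card F : ℤ) else 0) := by
        refine sum_congr rfl fun b _ => sum_congr rfl fun b' _ => ?_
        rw [quadraticChar_sum_sub_mul_sub hF]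
        split_ifs <;> ring
    _ = #B * (Fintype.card F - #B) := by
        simp only [sum_add_distrib, sum_const, nsmul_eq_mul, sum_ite_eq, sum_ite_mem, inter_self]
        ring

lemma sum_quadraticChar_sub_of_mem (hB : ∀ b ∈ B, ∀ b' ∈ B, b ≠ b' → IsSquare (b - b'))
    {t : F} (ht : t ∈ B) : ∑ b ∈ B, quadraticChar F (b - t) = #B - 1 := by
  rw [← add_sum_erase B _ ht, sub_self, quadraticChar_zero, zero_add,
    sum_congr rfl fun b hb =>
      (quadraticChar_one_iff_isSquare (sub_ne_zero.mpr (ne_of_mem_erase hb))).mpr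
        (hB b (mem_of_mem_erase hb) t ht (ne_of_mem_erase hb)),
    sum_const, card_erase_of_mem ht, nsmul_one, Nat.cast_pred (card_pos.mpr ⟨t, ht⟩)]

end QuadraticCharShifts

lemma sum_sq_le_mul_sum_of_nonneg_of_le {α R : Type*} [CommRing R] [LinearOrder R]
    [IsStrictOrderedRing R] {s : Finset α} {f : α → R} {m : R}
    (h0 : ∀ t ∈ s, 0 ≤ f t) (hm : ∀ t ∈ s, f t ≤ m) :
    ∑ t ∈ s, f t ^ 2 ≤ m * ∑ t ∈ s, f t := by
  rw [mul_sum]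
  exact sum_le_sum fun t ht => by
    rw [sq]; exact mul_le_mul_of_nonneg_right (hm t ht) (h0 t ht)

lemma exists_notMem_lt_zero_or_lt_of_sum_sq {α R : Type*} [Fintype α] [DecidableEq α]
    [CommRing R] [LinearOrder R] [IsStrictOrderedRing R] (B : Finset α) (f : α → R) (n : R)
    (hB : ∀ t ∈ B, f t = #B)
    (hsum : ∑ t, f t = n) (hsum_sq : ∑ t, f t ^ 2 = (#B + 1) * n - #B ^ 2) (hn : #B ^ 2 < n) :
    ∃ t ∉ B, f t < 0 ∨ (#B : R) - 1 < f t := by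
  by_contra! hcon
  have hcompl : ∑ t ∈ Bᶜ, f t = n - #B ^ 2 := by
    rw [← hsum, ← sum_add_sum_compl B f, sum_congr rfl hB]
    simp only [sum_const, nsmul_eq_mul, sq, add_sub_cancel_left]
  have hcompl_sq : ∑ t ∈ Bᶜ, f t ^ 2 = (#B + 1) * (n - #B ^ 2) := by
    rw [eq_sub_of_add_eq' (sum_add_sum_compl B fun t => f t ^ 2), hsum_sq,
      sum_congr rfl fun t ht => by rw [hB t ht]]
    simp only [sum_const, nsmul_eq_mul]
    ring
  have := sum_sq_le_mul_sum_of_nonneg_of_le (s := Bᶜ) (fun t ht => (hcon t (mem_compl.mp ht)).1)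
    (fun t ht => (hcon t (mem_compl.mp ht)).2)
  rw [hcompl, hcompl_sq] at this
  nlinarith

lemma quadChar_eq_quadraticChar {F : Type*} [Field F] [Fintype F] [DecidableEq F] (x : F) :
    quadChar x = quadraticChar F x := by
  rw [quadraticChar_apply, quadraticCharFun, quadChar]
  congr

theorem stmt_16 (p : ℕ) [hp : Fact p.Prime] (hq : p % 4 = 1)
    (B : Finset (ZMod p))
    (hB : ∀ b₁ ∈ B, ∀ b₂ ∈ B, b₁ ≠ b₂ → b₁ - b₂ ≠ 0 ∧ IsSquare (b₁ - b₂))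
    (hps : B.card ^ 2 < p) :
    ∃ t : ZMod p, t ∉ B ∧
      (1 + ∑ b ∈ B, quadChar (b - t) < 0 ∨
        (B.card : ℤ) - 1 < 1 + ∑ b ∈ B, quadChar (b - t)) := by
  have hF : ringChar (ZMod p) ≠ 2 := by rw [ZMod.ringChar_zmod_n]; omega
  simp_rw [quadChar_eq_quadraticChar]
  refine exists_notMem_lt_zero_or_lt_of_sum_sq B _ (p : ℤ) (fun t ht => ?_) ?_ ?_
    (by exact_mod_cast hps)
  · rw [sum_quadraticChar_sub_of_mem B (fun b hb b' hb' h => (hB b hb b' hb' h).2) ht]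
    ring
  · rw [sum_add_distrib, sum_sum_quadraticChar_sub B hF]
    simp [ZMod.card]
  · simp_rw [add_sq]
    rw [sum_add_distrib, sum_add_distrib, ← mul_sum, sum_sum_quadraticChar_sub B hF,
      sum_sq_sum_quadraticChar_sub B hF]
    simp only [one_pow, sum_const, card_univ, ZMod.card, nsmul_eq_mul, mul_one, mul_zero, add_zero]
    ring
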